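/- Every weakly Hausdorff topologically compact generalized topological space is weakly normal, provable in ZF. -/

import Mathlib

open Set TopologicalSpace Topology

universe u

/-- A generalized topology in the sense of Delfs–Knebusch (axioms following
Piękosz, Definition 2.2.1): `Cov` is the collection of admissible open families,
and the open sets are the members of `⋃₀ Cov`. -/
structure GenTop (X : Type u) : Type u where
  Cov : Set (Set (Set X))
  univ_open : Set.univ ∈ ⋃₀ Cov
  finite_admissible : ∀ 𝒰 : Set (Set X), 𝒰.Finite → 𝒰 ⊆ ⋃₀ Cov → 𝒰 ∈ Cov
  union_open : ∀ 𝒰 ∈ Cov, ⋃₀ 𝒰 ∈ ⋃₀ Cov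
  restrict : ∀ 𝒰 ∈ Cov, ∀ V ∈ ⋃₀ Cov, (fun U => V ∩ U) '' 𝒰 ∈ Cov
  transitive : ∀ 𝒰 ∈ Cov, ∀ f : Set X → Set (Set X),
    (∀ U ∈ 𝒰, f U ∈ Cov ∧ ⋃₀ f U = U) → {V : Set X | ∃ U ∈ 𝒰, V ∈ f U} ∈ Cov
  coarsen : ∀ 𝒰 ∈ Cov, ∀ 𝒱 ⊆ ⋃₀ Cov, (∀ U ∈ 𝒰, ∃ V ∈ 𝒱, U ⊆ V) →
    ⋃₀ 𝒱 = ⋃₀ 𝒰 → 𝒱 ∈ Cov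
  regular : ∀ 𝒰 ∈ Cov, ∀ W ⊆ ⋃₀ 𝒰, (∀ U ∈ 𝒰, W ∩ U ∈ ⋃₀ Cov) → W ∈ ⋃₀ Cov

namespace GenTop

variable {X : Type u} (G : GenTop X)

/-- The open sets of a gts. -/
def Opens : Set (Set X) := ⋃₀ G.Cov

/-- The closed sets of a gts. -/
def Closeds : Set (Set X) := {A : Set X | Aᶜ ∈ G.Opens}

/-- The topologization of a gts: the topology generated by the open sets. -/
def topol : TopologicalSpace X := TopologicalSpace.generateFrom G.Opens

/-- A gts is weakly normal if disjoint sets, each a singleton or closed,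
can be separated by disjoint open sets. -/
def WeaklyNormal : Prop :=
  ∀ A₁ A₂ : Set X, ((∃ x, A₁ = {x}) ∨ A₁ ∈ G.Closeds) →
    ((∃ x, A₂ = {x}) ∨ A₂ ∈ G.Closeds) → Disjoint A₁ A₂ →
    ∃ W₁ ∈ G.Opens, ∃ W₂ ∈ G.Opens, Disjoint W₁ W₂ ∧ A₁ ⊆ W₁ ∧ A₂ ⊆ W₂

end GenTop

/-!
The open sets of a gts are closed under finite unions and intersections, so they form
a basis of the topologization that is closed under finite unions. In a Hausdorff space two disjoint
compact sets have disjoint open neighbourhoods, and by compactness each neighbourhood can be shrunk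
to a finite union of basic sets, i.e. to a single basic set. Closed sets and singletons of the gts
are closed, hence compact, in the compact topologization.
-/

namespace TopologicalSpace.IsTopologicalBasis

variable {X : Type*} [TopologicalSpace X] {B : Set (Set X)}

theorem exists_mem_between_of_isCompact (hB : IsTopologicalBasis B) (hB_empty : ∅ ∈ B)
    (hB_union : ∀ ⦃u⦄, u ∈ B → ∀ ⦃v⦄, v ∈ B → u ∪ v ∈ B) {K U : Set X} (hK : IsCompact K)
    (hU : IsOpen U) (hKU : K ⊆ U) : ∃ b ∈ B, K ⊆ b ∧ b ⊆ U := by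
  refine hK.induction_on (p := fun s => ∃ b ∈ B, s ⊆ b ∧ b ⊆ U)
    ⟨∅, hB_empty, le_rfl, empty_subset _⟩
    (fun s t hst ⟨b, hb, htb, hbU⟩ => ⟨b, hb, hst.trans htb, hbU⟩)
    (fun s t ⟨b, hb, hsb, hbU⟩ ⟨c, hc, htc, hcU⟩ =>
      ⟨b ∪ c, hB_union hb hc, union_subset_union hsb htc, union_subset hbU hcU⟩) ?_
  intro x hx
  obtain ⟨b, hb, hxb, hbU⟩ := hB.exists_subset_of_mem_open (hKU hx) hU
  exact ⟨b, mem_nhdsWithin_of_mem_nhds ((hB.isOpen hb).mem_nhds hxb), b, hb, le_rfl, hbU⟩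

theorem exists_disjoint_mem_of_isCompact [T2Space X] (hB : IsTopologicalBasis B)
    (hB_empty : ∅ ∈ B) (hB_union : ∀ ⦃u⦄, u ∈ B → ∀ ⦃v⦄, v ∈ B → u ∪ v ∈ B) {K L : Set X}
    (hK : IsCompact K) (hL : IsCompact L) (hKL : Disjoint K L) :
    ∃ u ∈ B, ∃ v ∈ B, Disjoint u v ∧ K ⊆ u ∧ L ⊆ v := by
  obtain ⟨U, V, hU, hV, hKU, hLV, hUV⟩ := SeparatedNhds.of_isCompact_isCompact hK hL hKL
  obtain ⟨u, hu, hKu, huU⟩ := hB.exists_mem_between_of_isCompact hB_empty hB_union hK hU hKU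
  obtain ⟨v, hv, hLv, hvV⟩ := hB.exists_mem_between_of_isCompact hB_empty hB_union hL hV hLV
  exact ⟨u, hu, v, hv, hUV.mono huU hvV, hKu, hLv⟩

end TopologicalSpace.IsTopologicalBasis

namespace GenTop

variable {X : Type u} (G : GenTop X)

theorem sUnion_mem_opens_of_finite {𝒰 : Set (Set X)} (h𝒰 : 𝒰.Finite) (h𝒰G : 𝒰 ⊆ G.Opens) :
    ⋃₀ 𝒰 ∈ G.Opens :=
  G.union_open 𝒰 (G.finite_admissible 𝒰 h𝒰 h𝒰G)

theorem empty_mem_opens : (∅ : Set X) ∈ G.Opens := by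
  simpa using G.sUnion_mem_opens_of_finite finite_empty (empty_subset _)

theorem union_mem_opens {U V : Set X} (hU : U ∈ G.Opens) (hV : V ∈ G.Opens) :
    U ∪ V ∈ G.Opens := by
  simpa using G.sUnion_mem_opens_of_finite (toFinite {U, V}) (pair_subset hU hV)

theorem inter_mem_opens {U V : Set X} (hU : U ∈ G.Opens) (hV : V ∈ G.Opens) :
    U ∩ V ∈ G.Opens :=
  ⟨_, G.restrict {V} (G.finite_admissible {V} (finite_singleton V) (singleton_subset_iff.2 hV))
    U hU, V, rfl, rfl⟩

theorem isTopologicalBasis_opens : @IsTopologicalBasis X G.topol G.Opens :=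
  @isTopologicalBasis_of_subbasis_of_finiteInter X G.topol G.Opens rfl
    ⟨G.univ_open, fun _ hU _ hV => G.inter_mem_opens hU hV⟩

theorem isClosed_of_mem_closeds {A : Set X} (hA : A ∈ G.Closeds) : @IsClosed X G.topol A :=
  @isOpen_compl_iff X A G.topol |>.1 (GenerateOpen.basic _ hA)

end GenTop

/-- Every weakly Hausdorff topologically compact gts is weakly normal. -/
theorem stmt_8 {X : Type u} (G : GenTop X) (h2 : @T2Space X G.topol)
    (hc : @CompactSpace X G.topol) : G.WeaklyNormal := by
  let := G.topol
  have isCompact_of_singleton_or_closed : ∀ A : Set X, ((∃ x, A = {x}) ∨ A ∈ G.Closeds) →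
      IsCompact A := by
    rintro A (⟨x, rfl⟩ | hA)
    · exact isCompact_singleton
    · exact (G.isClosed_of_mem_closeds hA).isCompact
  intro A₁ A₂ hA₁ hA₂ hA₁₂
  exact G.isTopologicalBasis_opens.exists_disjoint_mem_of_isCompact G.empty_mem_opens
    (fun _ hU _ hV => G.union_mem_opens hU hV) (isCompact_of_singleton_or_closed A₁ hA₁)
    (isCompact_of_singleton_or_closed A₂ hA₂) hA₁₂
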